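/- arXiv:1604.05268 — 2 statements merged into one kernel-verified Lean document; each statement's English description precedes it below -/
import Mathlib

section
/- Fix t > 0, α ∈ (0, 1/(2π²)), and q ∈ (0,1). Then for all sufficiently small Δx > 0, for all ξ with |ξΔx| ≤ Δx^q and all η with ηΔx ∈ [−π + ξΔx, π + ξΔx], the inequality α(ηΔx)² ≤ 1 − sinc(ξΔx)·cos(ηΔx) holds. -/
open Real

/-- The unnormalized sinc function. -/
noncomputable def sinc (x : ℝ) : ℝ := if x = 0 then 1 else Real.sin x / x

/-!
With `s = ξΔx` and `y = ηΔx`: since `0 ≤ sinc s ≤ 1` for `|s| ≤ π`, one has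
`sinc s * cos y ≤ max (cos y) 0`, so the right-hand side is at least `min (1 - cos y) 1`. Once `Δx < 1`, `|s| ≤ Δx ^ q < 1` and hence
`|y| ≤ π + 1`, so `y² ≤ 2π²`. Then both `1 - cos y` and `1` dominate `y²/(2π²) ≥ α y²`:
for `|y| ≤ π` by Jordan's inequality `cos y ≤ 1 - 2y²/π²`, and otherwise because `cos y < 0`.
-/

theorem sinc_eq_real_sinc : _root_.sinc = Real.sinc := rfl

namespace Real

theorem sinc_nonneg_of_abs_le_pi {x : ℝ} (hx : |x| ≤ π) : 0 ≤ sinc x := by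
  wlog hx₀ : 0 ≤ x
  · simpa [sinc_neg] using this (x := -x) (by rwa [abs_neg]) (by linarith)
  rcases hx₀.eq_or_lt with rfl | hpos
  · simp
  rw [sinc_of_ne_zero hpos.ne']
  exact div_nonneg (sin_nonneg_of_nonneg_of_le_pi hx₀ ((le_abs_self x).trans hx)) hx₀

theorem sinc_mul_le_max_zero {s : ℝ} (hs : |s| ≤ π) (c : ℝ) : sinc s * c ≤ max c 0 := by
  rcases le_total 0 c with hc | hc
  · exact (mul_le_of_le_one_left hc (sinc_le_one s)).trans (le_max_left c 0)
  · exact (mul_nonpos_of_nonneg_of_nonpos (sinc_nonneg_of_abs_le_pi hs) hc).trans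
      (le_max_right c 0)

theorem sq_div_two_mul_pi_sq_le_one_sub_cos {y : ℝ} (hy : y ^ 2 ≤ 2 * π ^ 2) :
    y ^ 2 / (2 * π ^ 2) ≤ 1 - cos y := by
  have hπ : 0 < π ^ 2 := by positivity
  rcases le_or_gt |y| π with hyπ | hyπ
  · have hJordan := cos_le_one_sub_mul_cos_sq hyπ
    have : y ^ 2 / (2 * π ^ 2) ≤ 2 / π ^ 2 * y ^ 2 := by
      rw [div_le_iff₀ (by positivity)]
      field_simp
      nlinarith [sq_nonneg y]
    linarith
  · -- `|y| ≤ √2 π < 3π/2`, so `y` lies where the cosine is negative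
    have hy' : |y| < 3 * π / 2 := abs_lt_of_sq_lt_sq (by nlinarith) (by positivity)
    have hcos : cos y < 0 := by
      rw [← cos_abs]
      exact cos_neg_of_pi_div_two_lt_of_lt (by linarith [pi_pos]) (by linarith)
    have : y ^ 2 / (2 * π ^ 2) ≤ 1 := (div_le_one (by positivity)).2 hy
    linarith

theorem mul_sq_le_one_sub_sinc_mul_cos {α s y : ℝ} (hα : α ≤ 1 / (2 * π ^ 2))
    (hs : |s| ≤ 1) (hys : |y - s| ≤ π) : α * y ^ 2 ≤ 1 - sinc s * cos y := by
  have hy : |y| ≤ π + 1 := by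
    calc |y| = |(y - s) + s| := by ring_nf
      _ ≤ |y - s| + |s| := abs_add_le _ _
      _ ≤ π + 1 := add_le_add hys hs
  have hy2 : y ^ 2 ≤ 2 * π ^ 2 := by
    rw [← sq_abs]
    nlinarith [abs_nonneg y, pi_gt_three]
  have hsπ : |s| ≤ π := hs.trans (by linarith [pi_gt_three])
  calc α * y ^ 2 ≤ y ^ 2 / (2 * π ^ 2) := by
        rw [div_eq_mul_one_div, mul_comm (y ^ 2)]
        exact mul_le_mul_of_nonneg_right hα (sq_nonneg y)
    _ ≤ min (1 - cos y) 1 :=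
        le_min (sq_div_two_mul_pi_sq_le_one_sub_cos hy2) ((div_le_one (by positivity)).2 hy2)
    _ = 1 - max (cos y) 0 := by rw [← min_sub_sub_left, sub_zero]
    _ ≤ 1 - sinc s * cos y := sub_le_sub_left (sinc_mul_le_max_zero hsπ _) 1

end Real

theorem low_xi_high_eta_estimate_general
    (α : ℝ) (hα' : α < 1 / (2 * π ^ 2))
    (q : ℝ) (hq : 0 < q) :
    ∃ δ > 0, ∀ Δx : ℝ, 0 < Δx → Δx < δ → ∀ ξ η : ℝ,
      |ξ * Δx| ≤ Δx ^ q →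
      -π + ξ * Δx ≤ η * Δx → η * Δx ≤ π + ξ * Δx →
      α * (η * Δx) ^ 2 ≤ 1 - _root_.sinc (ξ * Δx) * Real.cos (η * Δx) := by
  refine ⟨1, one_pos, fun Δx hΔx hΔx1 ξ η hξ hlo hhi => ?_⟩
  have hs : |ξ * Δx| ≤ 1 := hξ.trans (rpow_lt_one hΔx.le hΔx1 hq).le
  have hys : |η * Δx - ξ * Δx| ≤ π := abs_sub_le_iff.2 ⟨by linarith, by linarith⟩
  rw [sinc_eq_real_sinc]
  exact mul_sq_le_one_sub_sinc_mul_cos hα'.le hs hys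

/-- Region Ω₂ estimate: for `α ∈ (0, 1/(2π²))`, `q ∈ (0,1)` and all sufficiently
small `Δx > 0`, if `|ξΔx| ≤ Δx^q` and `ηΔx ∈ [−π+ξΔx, π+ξΔx]` then
`α(ηΔx)² ≤ 1 − sinc(ξΔx)cos(ηΔx)`. -/
theorem low_xi_high_eta_estimate (t : ℝ) (ht : 0 < t)
    (α : ℝ) (hα : 0 < α) (hα' : α < 1 / (2 * π ^ 2))
    (q : ℝ) (hq : 0 < q) (hq' : q < 1) :
    ∃ δ > 0, ∀ Δx : ℝ, 0 < Δx → Δx < δ → ∀ ξ η : ℝ,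
      |ξ * Δx| ≤ Δx ^ q →
      -π + ξ * Δx ≤ η * Δx → η * Δx ≤ π + ξ * Δx →
      α * (η * Δx) ^ 2 ≤ 1 - _root_.sinc (ξ * Δx) * Real.cos (η * Δx) :=
  low_xi_high_eta_estimate_general α hα' q hq
end

section
/- Fix t > 0 and q ∈ (0,1). There exists α < 0.3 such that for all sufficiently small Δx > 0 and all ξ with |ξΔx| ≥ Δx^q, one has 1 − sinc(ξΔx)·cos(ηΔx) ≥ (1/100)·min(Δx^{2q}, 100(1−α)) for all η ∈ ℝ; consequently exp(−(2t/Δx²)(1 − sinc(ξΔx)cos(ηΔx))) ≤ exp(−(t/50)·Δx^{−2(1−q)}) for Δx small enough. -/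
/-!
Take `α = 0`. For `0 < X ≤ π`, `sin X = 2 sin (X/2) cos (X/2) ≤ X cos (X/2)` and the bound
`cos y ≤ 1 - 2 y² / π²` give `sinc X ≤ 1 - X² / 20`, while for `|X| > π` one has
`|sinc X| ≤ 1 / π`. Hence `|ξΔx| ≥ Δx^q` forces `1 - sinc (ξΔx) cos (ηΔx) ≥ 1 - |sinc (ξΔx)|
≥ Δx^{2q} / 20`, and multiplying by `2t / Δx²` gives the exponential bound.
-/

open Real

namespace Real

lemma sinc_abs (x : ℝ) : sinc |x| = sinc x := by
  rcases abs_choice x with h | h <;> simp only [h, sinc_neg]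

lemma sinc_le_one_sub_sq_div_twenty_of_pos {x : ℝ} (hpos : 0 < x) (hxpi : x ≤ π) :
    sinc x ≤ 1 - x ^ 2 / 20 := by
  have hsin : sin x ≤ x * cos (x / 2) := by
    have hdouble : sin x = 2 * sin (x / 2) * cos (x / 2) := by rw [← sin_two_mul]; ring_nf
    have hcos_nonneg : 0 ≤ cos (x / 2) :=
      cos_nonneg_of_mem_Icc ⟨by linarith [pi_pos], by linarith⟩
    rw [hdouble]
    nlinarith [sin_le (by linarith : 0 ≤ x / 2)]
  have hcos : cos (x / 2) ≤ 1 - 2 / π ^ 2 * (x / 2) ^ 2 :=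
    cos_le_one_sub_mul_cos_sq (by rw [abs_of_pos (by positivity)]; linarith [pi_pos])
  have hcoef : x ^ 2 / 20 ≤ 2 / π ^ 2 * (x / 2) ^ 2 := by
    have hpi_sq : π ^ 2 < 10 := by nlinarith [pi_lt_d2, pi_pos]
    rw [show 2 / π ^ 2 * (x / 2) ^ 2 = x ^ 2 / (2 * π ^ 2) by field_simp]
    gcongr; linarith
  rw [sinc_of_ne_zero hpos.ne', div_le_iff₀ hpos]
  nlinarith

lemma abs_sinc_le_one_sub_sq_div_twenty {x : ℝ} (hx : |x| ≤ π) : |sinc x| ≤ 1 - x ^ 2 / 20 := by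
  rcases eq_or_ne x 0 with rfl | hx0
  · simp
  rw [← sinc_abs, ← sq_abs x]
  have hpos : 0 < |x| := abs_pos.mpr hx0
  have hsinc_nonneg : 0 ≤ sinc |x| := by
    rw [sinc_of_ne_zero hpos.ne']
    exact div_nonneg (sin_nonneg_of_nonneg_of_le_pi hpos.le hx) hpos.le
  rw [abs_of_nonneg hsinc_nonneg]
  exact sinc_le_one_sub_sq_div_twenty_of_pos hpos hx

lemma abs_sinc_le_inv_abs {x : ℝ} (hx0 : x ≠ 0) : |sinc x| ≤ |x|⁻¹ := by
  rw [sinc_of_ne_zero hx0, abs_div, div_eq_mul_inv]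
  exact mul_le_of_le_one_left (by positivity) (abs_sin_le_one x)

lemma abs_sinc_le_one_sub_sq_div_twenty_of_le_abs {s x : ℝ} (hs₀ : 0 ≤ s) (hs₁ : s ≤ 1)
    (hsx : s ≤ |x|) : |sinc x| ≤ 1 - s ^ 2 / 20 := by
  have hs_sq : s ^ 2 ≤ 1 := pow_le_one₀ hs₀ hs₁
  rcases le_or_gt |x| π with hx | hx
  · have : s ^ 2 ≤ x ^ 2 := by rw [← sq_abs x]; gcongr
    linarith [abs_sinc_le_one_sub_sq_div_twenty hx]
  · have hinv : |x|⁻¹ ≤ 1 / 3 := by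
      rw [one_div]; gcongr; linarith [pi_gt_three]
    linarith [abs_sinc_le_inv_abs (x := x) (abs_pos.mp (pi_pos.trans hx))]

end Real

lemma rpow_neg_two_mul_one_sub {x : ℝ} (hx : 0 < x) (q : ℝ) :
    x ^ (-(2 * (1 - q))) = (x ^ q) ^ 2 / x ^ 2 := by
  rw [show -(2 * (1 - q)) = q * 2 - 2 by ring, rpow_sub hx, rpow_mul hx.le]
  norm_cast

theorem high_xi_estimate_general (t q : ℝ) (ht : 0 < t) (hq : 0 < q) :
    ∃ α : ℝ, α < 0.3 ∧ ∃ δ > 0, ∀ Δx : ℝ, 0 < Δx → Δx < δ →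
      ∀ ξ : ℝ, Δx ^ q ≤ |ξ * Δx| → ∀ η : ℝ,
        (1 / 100) * min (Δx ^ (2 * q)) (100 * (1 - α))
            ≤ 1 - _root_.sinc (ξ * Δx) * Real.cos (η * Δx) ∧
        Real.exp (-(2 * t / Δx ^ 2) * (1 - _root_.sinc (ξ * Δx) * Real.cos (η * Δx)))
            ≤ Real.exp (-(t / 50) * Δx ^ (-(2 * (1 - q)))) := by
  refine ⟨0, by norm_num, 1, one_pos, fun Δx hΔx hΔx₁ ξ hξ η => ?_⟩
  simp only [sinc_eq_real_sinc]
  set s := Δx ^ q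
  have hs₀ : 0 < s := rpow_pos_of_pos hΔx q
  have hs₁ : s < 1 := rpow_lt_one hΔx.le hΔx₁ hq
  have hsinc_cos : Real.sinc (ξ * Δx) * cos (η * Δx) ≤ |Real.sinc (ξ * Δx)| :=
    (le_abs_self _).trans <| by
      rw [abs_mul]; exact mul_le_of_le_one_right (abs_nonneg _) (abs_cos_le_one _)
  have hgap : s ^ 2 / 100 ≤ 1 - Real.sinc (ξ * Δx) * cos (η * Δx) := by
    linarith [Real.abs_sinc_le_one_sub_sq_div_twenty_of_le_abs hs₀.le hs₁.le hξ, sq_nonneg s]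
  have hmin : min (Δx ^ (2 * q)) (100 * (1 - 0)) = s ^ 2 := by
    rw [mul_comm, rpow_mul hΔx.le, rpow_two, sub_zero, min_eq_left (by nlinarith)]
  refine ⟨by rw [hmin]; linarith, exp_le_exp.mpr ?_⟩
  rw [rpow_neg_two_mul_one_sub hΔx]
  calc -(2 * t / Δx ^ 2) * (1 - Real.sinc (ξ * Δx) * cos (η * Δx))
      ≤ -(2 * t / Δx ^ 2) * (s ^ 2 / 100) := by
        rw [neg_mul, neg_mul, neg_le_neg_iff]; gcongr
    _ = -(t / 50) * (s ^ 2 / Δx ^ 2) := by ring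

/-- Region Ω₃ (high ξ-wavenumber) estimate: there is `α < 0.3` such that for all
sufficiently small `Δx > 0` and all `ξ` with `|ξΔx| ≥ Δx^q`, for every `η`,
`1 − sinc(ξΔx)cos(ηΔx) ≥ (1/100)·min(Δx^{2q}, 100(1−α))` and consequently
`exp(−(2t/Δx²)(1 − sinc(ξΔx)cos(ηΔx))) ≤ exp(−(t/50)Δx^{−2(1−q)})`. -/
theorem high_xi_estimate (t q : ℝ) (ht : 0 < t) (hq : 0 < q) (hq' : q < 1) :
    ∃ α : ℝ, α < 0.3 ∧ ∃ δ > 0, ∀ Δx : ℝ, 0 < Δx → Δx < δ →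
      ∀ ξ : ℝ, Δx ^ q ≤ |ξ * Δx| → ∀ η : ℝ,
        (1 / 100) * min (Δx ^ (2 * q)) (100 * (1 - α))
            ≤ 1 - _root_.sinc (ξ * Δx) * Real.cos (η * Δx) ∧
        Real.exp (-(2 * t / Δx ^ 2) * (1 - _root_.sinc (ξ * Δx) * Real.cos (η * Δx)))
            ≤ Real.exp (-(t / 50) * Δx ^ (-(2 * (1 - q)))) :=
  high_xi_estimate_general t q ht hq
end
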